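/- Let m, k ≥ 1, let C_B be an invertible (m−1)×(m−1) matrix and C_C an invertible (k−1)×(k−1) matrix over ℚ, let α = (0,…,0,1)ᵀ ∈ ℚ^{m−1}, β = (1,0,…,0)ᵀ ∈ ℚ^{k−1}, and let ε be the m×k matrix whose only nonzero entry is a 1 in position (m,1). Define the block matrices C₁ = [[C_B, C_B α],[0, 1]] (size m×m), C₂ = [[1, 0],[C_C β, C_C]] (size k×k), and C = [[C₁, C₁ε],[0, C₂]] (size (m+k)×(m+k)). For an invertible square matrix M over ℚ, let χ_M(x) denote the characteristic polynomial of −MᵀM^{−1}. Then χ_C(x) = χ_{C₁}(x)·χ_{C₂}(x) − x·χ_{C_B}(x)·χ_{C_C}(x). (This is the Subbotin–Sumin splitting formula for Coxeter polynomials of algebras whose quiver splits as a glued graph: taking C_B, C_C, C₁, C₂, C to be the Cartan matrices of B, C, Γ₁, Γ₂, Γ, it gives χ(Γ,x) = χ(Γ₁,x)χ(Γ₂,x) − xχ(B,x)χ(C,x).) -/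

import Mathlib

/-! # Preliminary definitions: quivers, bound quiver algebras, gentle algebras,
Gorenstein projective modules, Cohen-Macaulay Auslander algebras -/

/-- A finite quiver: finite sets of vertices and arrows with source and target maps. -/
structure QuiverData : Type 1 where
  V : Type
  A : Type
  [finV : Finite V]
  [finA : Finite A]
  s : A → V
  t : A → V

attribute [instance] QuiverData.finV QuiverData.finA

namespace QuiverData

/-- A list of arrows `[a₁, …, aₙ]` is composable (as the path `a₁a₂⋯aₙ`, where `aₙ` is
applied first and `a₁` last) if `s(aᵢ) = t(aᵢ₊₁)` for consecutive arrows. -/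
def Composable (Q : QuiverData) (l : List Q.A) : Prop :=
  l.Chain' (fun a b => Q.s a = Q.t b)

/-- The quiver is connected: any two vertices are linked by a chain of arrows
(in either direction). -/
def IsConnected (Q : QuiverData) : Prop :=
  ∀ v w : Q.V, Relation.ReflTransGen
    (fun x y => ∃ a : Q.A, (Q.s a = x ∧ Q.t a = y) ∨ (Q.s a = y ∧ Q.t a = x)) v w

end QuiverData

/-- The defining relations of the bound quiver algebra `KQ/⟨I⟩` inside the free algebra on
vertices and arrows: the trivial paths `e_v` are orthogonal idempotents summing to `1`,
arrows are compatible with their endpoints, and the relation paths in `I` vanish. -/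
inductive BQRel (K : Type) [CommRing K] (Q : QuiverData) (I : Set (List Q.A)) :
    FreeAlgebra K (Q.V ⊕ Q.A) → FreeAlgebra K (Q.V ⊕ Q.A) → Prop
  | vert_mul_self (v : Q.V) :
      BQRel K Q I (FreeAlgebra.ι K (Sum.inl v) * FreeAlgebra.ι K (Sum.inl v))
        (FreeAlgebra.ι K (Sum.inl v))
  | vert_mul_vert (v w : Q.V) (h : v ≠ w) :
      BQRel K Q I (FreeAlgebra.ι K (Sum.inl v) * FreeAlgebra.ι K (Sum.inl w)) 0
  | sum_vert : BQRel K Q I (∑ᶠ v : Q.V, FreeAlgebra.ι K (Sum.inl v)) 1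
  | arr_tgt (a : Q.A) :
      BQRel K Q I (FreeAlgebra.ι K (Sum.inl (Q.t a)) * FreeAlgebra.ι K (Sum.inr a))
        (FreeAlgebra.ι K (Sum.inr a))
  | arr_src (a : Q.A) :
      BQRel K Q I (FreeAlgebra.ι K (Sum.inr a) * FreeAlgebra.ι K (Sum.inl (Q.s a)))
        (FreeAlgebra.ι K (Sum.inr a))
  | rel (p : List Q.A) (hp : p ∈ I) :
      BQRel K Q I ((p.map (fun a => FreeAlgebra.ι K (Sum.inr a))).prod) 0

/-- The bound quiver algebra `KQ/⟨I⟩`. -/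
abbrev BoundQuiverAlgebra (K : Type) [CommRing K] (Q : QuiverData) (I : Set (List Q.A)) :
    Type :=
  RingQuot (BQRel K Q I)

section BQA

variable (K : Type) [CommRing K] (Q : QuiverData) (I : Set (List Q.A))

/-- The idempotent of the bound quiver algebra corresponding to a vertex. -/
noncomputable def vertEl (v : Q.V) : BoundQuiverAlgebra K Q I :=
  RingQuot.mkAlgHom K (BQRel K Q I) (FreeAlgebra.ι K (Sum.inl v))

/-- The element of the bound quiver algebra corresponding to an arrow. -/
noncomputable def arrEl (a : Q.A) : BoundQuiverAlgebra K Q I :=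
  RingQuot.mkAlgHom K (BQRel K Q I) (FreeAlgebra.ι K (Sum.inr a))

theorem arrEl_mul_vertEl (a : Q.A) :
    arrEl K Q I a * vertEl K Q I (Q.s a) = arrEl K Q I a := by
  rw [arrEl, vertEl, ← map_mul]
  exact RingQuot.mkAlgHom_rel K (BQRel.arr_src a)

theorem vertEl_mul_arrEl (a : Q.A) :
    vertEl K Q I (Q.t a) * arrEl K Q I a = arrEl K Q I a := by
  rw [arrEl, vertEl, ← map_mul]
  exact RingQuot.mkAlgHom_rel K (BQRel.arr_tgt a)

end BQA

/-- A bound quiver `(Q, I)` is gentle. -/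
structure IsGentle (Q : QuiverData) (I : Set (List Q.A)) : Prop where
  /-- relations are composable paths of length two -/
  rel_length_two : ∀ p ∈ I, p.length = 2 ∧ Q.Composable p
  /-- each vertex is the starting point of at most two arrows -/
  start_le_two : ∀ v : Q.V, {a : Q.A | Q.s a = v}.ncard ≤ 2
  /-- each vertex is the ending point of at most two arrows -/
  target_le_two : ∀ v : Q.V, {a : Q.A | Q.t a = v}.ncard ≤ 2
  /-- for each arrow `α` there is at most one arrow `β` with `t β = s α` and `αβ ∉ I` -/
  unique_comp_notmem : ∀ α : Q.A, {β : Q.A | Q.t β = Q.s α ∧ [α, β] ∉ I}.Subsingleton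
  /-- for each arrow `α` there is at most one arrow `γ` with `s γ = t α` and `γα ∉ I` -/
  unique_comp_notmem' : ∀ α : Q.A, {γ : Q.A | Q.s γ = Q.t α ∧ [γ, α] ∉ I}.Subsingleton
  /-- for each arrow `α` there is at most one arrow `β` with `t β = s α` and `αβ ∈ I` -/
  unique_comp_mem : ∀ α : Q.A, {β : Q.A | Q.t β = Q.s α ∧ [α, β] ∈ I}.Subsingleton
  /-- for each arrow `α` there is at most one arrow `γ` with `s γ = t α` and `γα ∈ I` -/
  unique_comp_mem' : ∀ α : Q.A, {γ : Q.A | Q.s γ = Q.t α ∧ [γ, α] ∈ I}.Subsingleton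

/-- A `K`-algebra is a gentle algebra if it is isomorphic to the bound quiver algebra of a
gentle bound quiver (with finite-dimensional quotient). -/
def IsGentleAlgebra (K : Type) [Field K] (A : Type) [Ring A] [Algebra K A] : Prop :=
  ∃ (Q : QuiverData) (I : Set (List Q.A)), IsGentle Q I ∧
    FiniteDimensional K (BoundQuiverAlgebra K Q I) ∧
    Nonempty (A ≃ₐ[K] BoundQuiverAlgebra K Q I)

section SMulComm

variable (K : Type) [CommRing K] (Λ : Type) [Ring Λ] [Algebra K Λ]
variable (M : Type) [AddCommGroup M] [Module Λ M] [Module K M] [IsScalarTower K Λ M]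

instance (priority := 100) smulCommClass_of_isScalarTower' : SMulCommClass Λ K M :=
  ⟨fun a k m => by
    rw [← algebraMap_smul Λ k m, ← mul_smul, ← Algebra.commutes, mul_smul, algebraMap_smul]⟩

end SMulComm

/-! ## Gorenstein projective modules -/

/-- A module is indecomposable if it is nontrivial and its only idempotent endomorphisms
are `0` and `1`. -/
def IsIndecomposableModule (Λ : Type) [Ring Λ] (M : Type) [AddCommGroup M] [Module Λ M] :
    Prop :=
  Nontrivial M ∧ ∀ e : M →ₗ[Λ] M, e ∘ₗ e = e → e = 0 ∨ e = LinearMap.id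

/-- A module `G` is Gorenstein projective if there is an exact complex of finitely
generated projective modules which stays exact under `Hom_Λ(-, Λ)` and whose kernel in
degree `0` is isomorphic to `G`. -/
def IsGorensteinProjective (Λ : Type) [Ring Λ] (G : Type) [AddCommGroup G] [Module Λ G] :
    Prop :=
  ∃ (P : ℤ → ModuleCat.{0} Λ) (d : ∀ i : ℤ, P i →ₗ[Λ] P (i + 1)),
    (∀ i, Module.Finite Λ (P i)) ∧
    (∀ i, Module.Projective Λ (P i)) ∧
    (∀ i, LinearMap.range (d i) = LinearMap.ker (d (i + 1))) ∧
    (∀ (i : ℤ) (f : P (i + 1) →ₗ[Λ] Λ),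
      f ∘ₗ d i = 0 ↔ ∃ g : P (i + 1 + 1) →ₗ[Λ] Λ, f = g ∘ₗ d (i + 1)) ∧
    Nonempty (G ≃ₗ[Λ] LinearMap.ker (d 0))

/-- An algebra is CM-finite if there are only finitely many isomorphism classes of
indecomposable finitely generated Gorenstein projective modules. -/
def IsCMFinite (Λ : Type) [Ring Λ] : Prop :=
  ∃ (n : ℕ) (E : Fin n → ModuleCat.{0} Λ),
    ∀ G : ModuleCat.{0} Λ, Module.Finite Λ G → IsGorensteinProjective Λ G →
      IsIndecomposableModule Λ G → ∃ i, Nonempty (G ≃ₗ[Λ] E i)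

/-- An algebra is representation finite if there are only finitely many isomorphism classes
of indecomposable finitely generated modules. -/
def IsRepFinite (Λ : Type) [Ring Λ] : Prop :=
  ∃ (n : ℕ) (M : Fin n → ModuleCat.{0} Λ),
    ∀ N : ModuleCat.{0} Λ, Module.Finite Λ N → IsIndecomposableModule Λ N →
      ∃ i, Nonempty (N ≃ₗ[Λ] M i)

/-- A complete family of representatives of the isomorphism classes of indecomposable
finitely generated Gorenstein projective modules. -/
structure IsGProjReps (Λ : Type) [Ring Λ] {n : ℕ} (E : Fin n → ModuleCat.{0} Λ) : Prop where
  finite : ∀ i, Module.Finite Λ (E i)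
  gproj : ∀ i, IsGorensteinProjective Λ (E i)
  indec : ∀ i, IsIndecomposableModule Λ (E i)
  noniso : ∀ i j, i ≠ j → IsEmpty ((E i) ≃ₗ[Λ] (E j))
  complete : ∀ G : ModuleCat.{0} Λ, Module.Finite Λ G → IsGorensteinProjective Λ G →
    IsIndecomposableModule Λ G → ∃ i, Nonempty (G ≃ₗ[Λ] E i)

/-- The Cohen-Macaulay Auslander algebra `End_Λ(E₁ ⊕ ⋯ ⊕ Eₙ)ᵒᵖ` associated to a family of
representatives of the indecomposable Gorenstein projective modules. -/
abbrev CMAuslanderAlgebra (Λ : Type) [Ring Λ] {n : ℕ} (E : Fin n → ModuleCat.{0} Λ) : Type :=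
  (Module.End Λ (∀ i, E i))ᵐᵒᵖ

/-! ## Indecomposable projectives `P_v`, radical summands `R(α)`, dimension vectors -/

section Modules

variable (K : Type) [CommRing K] (Q : QuiverData) (I : Set (List Q.A))

/-- The indecomposable projective module `P_v = Λ e_v` of the bound quiver algebra,
as a left submodule of the regular module. -/
noncomputable def Pmod (v : Q.V) :
    Submodule (BoundQuiverAlgebra K Q I) (BoundQuiverAlgebra K Q I) :=
  LinearMap.range (LinearMap.toSpanSingleton (BoundQuiverAlgebra K Q I)
    (BoundQuiverAlgebra K Q I) (vertEl K Q I v))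

/-- The left ideal `R(α) = Λ α` generated by an arrow `α`. -/
noncomputable def Rmod (a : Q.A) :
    Submodule (BoundQuiverAlgebra K Q I) (BoundQuiverAlgebra K Q I) :=
  LinearMap.range (LinearMap.toSpanSingleton (BoundQuiverAlgebra K Q I)
    (BoundQuiverAlgebra K Q I) (arrEl K Q I a))

theorem Rmod_le_Pmod (a : Q.A) : Rmod K Q I a ≤ Pmod K Q I (Q.s a) := by
  rintro x ⟨y, rfl⟩
  refine ⟨y * arrEl K Q I a, ?_⟩
  simp only [LinearMap.toSpanSingleton_apply, smul_eq_mul, mul_assoc, arrEl_mul_vertEl]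

/-- Right multiplication by the arrow `α`, as a map `P_{t(α)} → R(α)`. -/
noncomputable def multMap (a : Q.A) :
    ↥(Pmod K Q I (Q.t a)) →ₗ[BoundQuiverAlgebra K Q I] ↥(Rmod K Q I a) :=
  (LinearMap.toSpanSingleton (BoundQuiverAlgebra K Q I) (BoundQuiverAlgebra K Q I)
    (arrEl K Q I a)).restrict (fun x _ => ⟨x, rfl⟩)

/-- The entry at the vertex `v` of the dimension vector of a module over a bound quiver
algebra: `dim_K (e_v M)`. -/
noncomputable def dimVecEntry (M : Type) [AddCommGroup M]
    [Module (BoundQuiverAlgebra K Q I) M] (v : Q.V) : ℕ :=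
  Module.finrank K (LinearMap.range
    (RestrictScalars.lsmul K (BoundQuiverAlgebra K Q I) M (vertEl K Q I v)))

/-- The dimension vector of a module over a bound quiver algebra. -/
noncomputable def dimVec (M : Type) [AddCommGroup M]
    [Module (BoundQuiverAlgebra K Q I) M] : Q.V → ℕ :=
  fun v => dimVecEntry K Q I M v

/-- Every indecomposable finitely generated module over `KQ/⟨I⟩` is determined up to
isomorphism by its dimension vector. -/
def DetByDimVec : Prop :=
  ∀ M N : ModuleCat.{0} (BoundQuiverAlgebra K Q I),
    Module.Finite (BoundQuiverAlgebra K Q I) M →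
    Module.Finite (BoundQuiverAlgebra K Q I) N →
    IsIndecomposableModule (BoundQuiverAlgebra K Q I) M →
    IsIndecomposableModule (BoundQuiverAlgebra K Q I) N →
    dimVec K Q I M = dimVec K Q I N →
    Nonempty (M ≃ₗ[BoundQuiverAlgebra K Q I] N)

/-! ## Cycles of relations and the Auslander bound quiver `(Q^Aus, I^Aus)` -/

/-- A repetition-free cyclic path `α₁ ⋯ αₙ` (given as the list `[α₁, …, αₙ]`) with
`αᵢαᵢ₊₁ ∈ I` for all `i` (indices mod `n`); these are the elements of `𝒞(Λ)`. -/
def IsRelCycle (l : List Q.A) : Prop :=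
  l ≠ [] ∧ l.Nodup ∧
    ∀ i : Fin l.length, [l.get i, l.get ⟨(i + 1) % l.length, Nat.mod_lt _ i.pos⟩] ∈ I

/-- An arrow is cyclic if it lies on some cycle in `𝒞(Λ)`. -/
def IsCyclicArrow (a : Q.A) : Prop := ∃ l : List Q.A, IsRelCycle Q I l ∧ a ∈ l

/-- The quiver `Q^Aus` of the Cohen-Macaulay Auslander algebra: the vertices are the
vertices of `Q` together with the cyclic arrows of `Q`; the arrows are the non-cyclic
arrows of `Q` together with, for each cyclic arrow `α`, arrows `α⁺ : s(α) → α` and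
`α⁻ : α → t(α)`. -/
def ausQuiver : QuiverData where
  V := Q.V ⊕ {a : Q.A // IsCyclicArrow Q I a}
  A := {a : Q.A // ¬ IsCyclicArrow Q I a} ⊕
    ({a : Q.A // IsCyclicArrow Q I a} ⊕ {a : Q.A // IsCyclicArrow Q I a})
  s := fun x => match x with
    | Sum.inl a => Sum.inl (Q.s a.1)
    | Sum.inr (Sum.inl a) => Sum.inl (Q.s a.1)   -- α⁺ : s(α) → α
    | Sum.inr (Sum.inr a) => Sum.inr a           -- α⁻ : α → t(α)
  t := fun x => match x with
    | Sum.inl a => Sum.inl (Q.t a.1)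
    | Sum.inr (Sum.inl a) => Sum.inr a
    | Sum.inr (Sum.inr a) => Sum.inl (Q.t a.1)

/-- The relations `I^Aus` of the Cohen-Macaulay Auslander algebra:
`β⁺α⁻` for `βα ∈ I` with `α, β` cyclic, and `βα` for `βα ∈ I` with `α, β` non-cyclic. -/
def ausRels : Set (List (ausQuiver Q I).A) :=
  {p | ∃ (β α : Q.A) (hβ : IsCyclicArrow Q I β) (hα : IsCyclicArrow Q I α),
      [β, α] ∈ I ∧ p = [Sum.inr (Sum.inl ⟨β, hβ⟩), Sum.inr (Sum.inr ⟨α, hα⟩)]} ∪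
  {p | ∃ (β α : Q.A) (hβ : ¬ IsCyclicArrow Q I β) (hα : ¬ IsCyclicArrow Q I α),
      [β, α] ∈ I ∧ p = [Sum.inl ⟨β, hβ⟩, Sum.inl ⟨α, hα⟩]}

end Modules

/-! ## Strings and bands -/

/-- A letter: an arrow (`Sum.inl`) or the formal inverse of an arrow (`Sum.inr`). -/
def Letter (Q : QuiverData) : Type := Q.A ⊕ Q.A

namespace Letter

variable {Q : QuiverData}

def src : Letter Q → Q.V
  | Sum.inl a => Q.s a
  | Sum.inr a => Q.t a

def tgt : Letter Q → Q.V
  | Sum.inl a => Q.t a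
  | Sum.inr a => Q.s a

def inv : Letter Q → Letter Q
  | Sum.inl a => Sum.inr a
  | Sum.inr a => Sum.inl a

end Letter

/-- The formal inverse of a word of letters. -/
def invWord {Q : QuiverData} (w : List (Letter Q)) : List (Letter Q) :=
  (w.map Letter.inv).reverse

section Strings

variable (Q : QuiverData) (I : Set (List Q.A))

/-- A string for the bound quiver `(Q, I)`: a nonempty word `c₁c₂⋯cₙ` in arrows and their
formal inverses with `s(cᵢ) = t(cᵢ₊₁)`, `cᵢ₊₁ ≠ cᵢ⁻¹`, such that no subword nor the inverse
of a subword lies in `I`. -/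
def IsString (w : List (Letter Q)) : Prop :=
  w ≠ [] ∧
  w.Chain' (fun c d => c.src = d.tgt) ∧
  w.Chain' (fun c d => d ≠ c.inv) ∧
  ∀ l : List Q.A, l ∈ I →
    ¬ (l.map Sum.inl).IsInfix w ∧ ¬ (invWord (l.map Sum.inl)).IsInfix w

/-- A band: a cyclic string all of whose powers are strings, and which is not a proper
power of another string. -/
def IsBand (w : List (Letter Q)) : Prop :=
  IsString Q I w ∧
  w.getLast?.map Letter.src = w.head?.map Letter.tgt ∧
  (∀ m : ℕ, 1 ≤ m → IsString Q I (List.flatten (List.replicate m w))) ∧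
  ¬ ∃ (u : List (Letter Q)) (m : ℕ), 2 ≤ m ∧ w = List.flatten (List.replicate m u)

/-- There exists a band for the bound quiver `(Q, I)`. -/
def HasBand : Prop := ∃ w : List (Letter Q), IsBand Q I w

end Strings

/-! ## Radical, irreducible morphisms and almost split sequences in subcategories -/

section Irr

variable (K : Type) [Field K] (Λ : Type) [Ring Λ] [Algebra K Λ]

/-- The subcategory (given as a set of objects) of finitely generated Gorenstein projective
modules, `Gproj Λ`. -/
def gprojClass : Set (ModuleCat.{0} Λ) :=
  {M | Module.Finite Λ M ∧ IsGorensteinProjective Λ M}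

/-- The subcategory (given as a set of objects) of finitely generated projective modules,
`proj Λ`. -/
def projClass : Set (ModuleCat.{0} Λ) :=
  {M | Module.Finite Λ M ∧ Module.Projective Λ M}

variable {Λ}
variable {X Y : Type} [AddCommGroup X] [Module Λ X] [AddCommGroup Y] [Module Λ Y]

/-- A linear map is a section if it has a left inverse. -/
def IsSectionMap (f : X →ₗ[Λ] Y) : Prop := ∃ r : Y →ₗ[Λ] X, r ∘ₗ f = LinearMap.id

/-- A linear map is a retraction if it has a right inverse. -/
def IsRetractionMap (f : X →ₗ[Λ] Y) : Prop := ∃ s : Y →ₗ[Λ] X, f ∘ₗ s = LinearMap.id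

/-- A morphism between objects of a full subcategory `D` of `mod Λ` is irreducible in `D`
if it is neither a section nor a retraction, and in any factorization through an object
of `D` the first factor is a section or the second factor is a retraction. -/
def IsIrreducibleIn (D : Set (ModuleCat.{0} Λ)) (f : X →ₗ[Λ] Y) : Prop :=
  ¬ IsSectionMap f ∧ ¬ IsRetractionMap f ∧
  ∀ Z ∈ D, ∀ (h : X →ₗ[Λ] ↥Z) (g : ↥Z →ₗ[Λ] Y),
    f = g ∘ₗ h → IsSectionMap h ∨ IsRetractionMap g

/-- Membership in the radical of the category of `Λ`-modules:
`f ∈ rad(X,Y)` iff `1 - g∘f` is invertible for every `g : Y → X`. -/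
def InRad (f : X →ₗ[Λ] Y) : Prop :=
  ∀ g : Y →ₗ[Λ] X, IsUnit ((1 : Module.End Λ X) - (g ∘ₗ f : Module.End Λ X))

variable (X Y)
variable [Module K Y] [IsScalarTower K Λ Y]

/-- The radical `rad(X,Y)` as a `K`-subspace of `Hom_Λ(X,Y)`. -/
noncomputable def radHom : Submodule K (X →ₗ[Λ] Y) :=
  Submodule.span K {f | InRad f}

/-- `rad²_D(X,Y)`: the subspace of `Hom_Λ(X,Y)` spanned by composites of two radical
morphisms passing through an object of the subcategory `D`. -/
noncomputable def rad2Hom (D : Set (ModuleCat.{0} Λ)) : Submodule K (X →ₗ[Λ] Y) :=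
  Submodule.span K {h | ∃ Z ∈ D, ∃ (f : X →ₗ[Λ] ↥Z) (g : ↥Z →ₗ[Λ] Y),
    InRad f ∧ InRad g ∧ h = g ∘ₗ f}

/-- `dim_K irr_D(X,Y) = dim_K rad(X,Y)/rad²_D(X,Y)`, the dimension of the space of
irreducible morphisms from `X` to `Y` in the subcategory `D`. -/
noncomputable def irrDim (D : Set (ModuleCat.{0} Λ)) : ℕ :=
  Module.finrank K
    (↥(radHom K X Y) ⧸ ((rad2Hom K X Y D).comap (radHom K X Y).subtype))

variable {X Y}

/-- `0 → L →ᵃ M →ᵇ N → 0` is an almost split (Auslander-Reiten) sequence in the full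
subcategory `D`: it is a non-split short exact sequence with indecomposable end terms,
`b` is right almost split in `D` and `a` is left almost split in `D`. -/
def IsAlmostSplitSequenceIn (D : Set (ModuleCat.{0} Λ)) {L M N : Type}
    [AddCommGroup L] [Module Λ L] [AddCommGroup M] [Module Λ M]
    [AddCommGroup N] [Module Λ N] (a : L →ₗ[Λ] M) (b : M →ₗ[Λ] N) : Prop :=
  Function.Injective a ∧ Function.Surjective b ∧ LinearMap.range a = LinearMap.ker b ∧
  (¬ ∃ s : N →ₗ[Λ] M, b ∘ₗ s = LinearMap.id) ∧
  IsIndecomposableModule Λ L ∧ IsIndecomposableModule Λ N ∧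
  (∀ Z ∈ D, ∀ g : ↥Z →ₗ[Λ] N, ¬ IsRetractionMap g → ∃ h : ↥Z →ₗ[Λ] M, b ∘ₗ h = g) ∧
  (∀ Z ∈ D, ∀ f : L →ₗ[Λ] ↥Z, ¬ IsSectionMap f → ∃ h : M →ₗ[Λ] ↥Z, h ∘ₗ a = f)

end Irr

/-! ## Derived equivalence -/

open CategoryTheory in
/-- Two rings are derived equivalent if there is a triangulated equivalence between the
derived categories of their module categories. -/
def DerivedEquivalent (A B : Type) [Ring A] [Ring B] : Prop :=
  letI : HasDerivedCategory (ModuleCat.{0} A) := HasDerivedCategory.standard _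
  letI : HasDerivedCategory (ModuleCat.{0} B) := HasDerivedCategory.standard _
  ∃ (e : DerivedCategory (ModuleCat.{0} A) ≌ DerivedCategory (ModuleCat.{0} B))
    (hc : e.functor.CommShift ℤ), letI := hc; e.functor.IsTriangulated

/-! ## Cluster-tilted algebras of type `A_n` -/

section Cluster

variable (Q : QuiverData)

/-- An oriented 3-cycle (triangle) `a, b, c` with pairwise distinct vertices. -/
def IsTriangle (a b c : Q.A) : Prop :=
  Q.t a = Q.s b ∧ Q.t b = Q.s c ∧ Q.t c = Q.s a ∧
  Q.s a ≠ Q.s b ∧ Q.s b ≠ Q.s c ∧ Q.s a ≠ Q.s c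

/-- An arrow lies on a triangle. -/
def OnTriangle (a : Q.A) : Prop :=
  ∃ b c : Q.A, IsTriangle Q a b c ∨ IsTriangle Q b a c ∨ IsTriangle Q b c a

/-- Two arrows belong to a common triangle (consecutively). -/
def InCommonTriangle (a b : Q.A) : Prop :=
  ∃ c : Q.A, IsTriangle Q a b c ∨ IsTriangle Q b a c

/-- The set of neighbours of a vertex in the underlying graph of the quiver. -/
def neighbors (v : Q.V) : Set Q.V :=
  {w | w ≠ v ∧ ∃ a : Q.A, (Q.s a = v ∧ Q.t a = w) ∨ (Q.s a = w ∧ Q.t a = v)}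

/-- The set of arrows adjacent to a vertex. -/
def adjArrows (v : Q.V) : Set Q.A := {a | Q.s a = v ∨ Q.t a = v}

/-- A non-trivial cycle in the underlying graph of `Q`: a nonempty, cyclically composable,
cyclically reduced closed walk through pairwise distinct vertices. -/
def IsCycleWalk (w : List (Letter Q)) : Prop :=
  w ≠ [] ∧
  w.Chain' (fun c d => c.tgt = d.src) ∧
  w.getLast?.map Letter.tgt = w.head?.map Letter.src ∧
  w.Chain' (fun c d => d ≠ c.inv) ∧
  w.head? ≠ w.getLast?.map Letter.inv ∧
  (w.map Letter.src).Nodup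

/-- A walk is oriented if all its letters are direct arrows or all are inverse arrows. -/
def IsOrientedWalk (w : List (Letter Q)) : Prop :=
  (∀ c ∈ w, ∃ a : Q.A, c = Sum.inl a) ∨ (∀ c ∈ w, ∃ a : Q.A, c = Sum.inr a)

/-- The quivers of cluster-tilted algebras of type `A`: all non-trivial cycles are oriented
of length 3, each vertex has at most four neighbours, a vertex with four neighbours has two
adjacent arrows in one 3-cycle and the other two in another, and a vertex with exactly
three neighbours has two adjacent arrows in a 3-cycle and the third in no 3-cycle. -/
structure IsClusterQuiverA (Q : QuiverData) : Prop where
  cycles : ∀ w : List (Letter Q), IsCycleWalk Q w → w.length = 3 ∧ IsOrientedWalk Q w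
  nbhd_le_four : ∀ v : Q.V, (neighbors Q v).ncard ≤ 4
  four_nbhd : ∀ v : Q.V, (neighbors Q v).ncard = 4 → ∃ a₁ a₂ a₃ a₄ : Q.A,
    adjArrows Q v = {a₁, a₂, a₃, a₄} ∧
    a₁ ≠ a₂ ∧ a₁ ≠ a₃ ∧ a₁ ≠ a₄ ∧ a₂ ≠ a₃ ∧ a₂ ≠ a₄ ∧ a₃ ≠ a₄ ∧
    ∃ c c' : Q.A, (IsTriangle Q a₁ a₂ c ∨ IsTriangle Q a₂ a₁ c) ∧
      (IsTriangle Q a₃ a₄ c' ∨ IsTriangle Q a₄ a₃ c') ∧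
      ({a₁, a₂, c} : Set Q.A) ≠ {a₃, a₄, c'}
  three_nbhd : ∀ v : Q.V, (neighbors Q v).ncard = 3 → ∃ a₁ a₂ a₃ : Q.A,
    adjArrows Q v = {a₁, a₂, a₃} ∧ a₁ ≠ a₂ ∧ a₁ ≠ a₃ ∧ a₂ ≠ a₃ ∧
    InCommonTriangle Q a₁ a₂ ∧ ¬ OnTriangle Q a₃

/-- The relations of a cluster-tilted algebra of type `A`: all paths of length two lying on
a 3-cycle. -/
def clusterRels : Set (List Q.A) :=
  {p | ∃ a b c : Q.A, IsTriangle Q a b c ∧ p = [b, a]}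

/-- The number of triangles (3-cycles) of the quiver. -/
noncomputable def triangleCount : ℕ :=
  Set.ncard {S : Set Q.A | ∃ a b c : Q.A, IsTriangle Q a b c ∧ S = {a, b, c}}

/-- The number of lines of the quiver: arrows lying on no triangle. -/
noncomputable def lineCount : ℕ := Set.ncard {a : Q.A | ¬ OnTriangle Q a}

end Cluster

/-! ## Cartan matrices, schurian algebras and Coxeter polynomials -/

section Cartan

variable (K : Type) [Field K] (Q : QuiverData) (I : Set (List Q.A))

set_option maxSynthPendingDepth 2 in
/-- The Cartan matrix entry `dim_K Hom(P_w, P_v)` of the bound quiver algebra. -/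
noncomputable def cartanEntry (v w : Q.V) : ℕ :=
  Module.finrank K (↥(Pmod K Q I w) →ₗ[BoundQuiverAlgebra K Q I] ↥(Pmod K Q I v))

/-- A bound quiver algebra is schurian if all entries of its Cartan matrix are `0` or `1`. -/
def IsSchurianAlg : Prop := ∀ v w : Q.V, cartanEntry K Q I v w ≤ 1

/-- The Cartan matrix of the bound quiver algebra, over `ℚ`. -/
noncomputable def cartanMatrix : Matrix Q.V Q.V ℚ :=
  Matrix.of fun v w => (cartanEntry K Q I v w : ℚ)

/-- The Coxeter polynomial: the characteristic polynomial of the asymmetry matrix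
`-Cᵀ C⁻¹` of the Cartan matrix. -/
noncomputable def coxeterPolynomial : Polynomial ℚ :=
  letI := Fintype.ofFinite Q.V
  letI := Classical.decEq Q.V
  Matrix.charpoly (-(cartanMatrix K Q I).transpose * (cartanMatrix K Q I)⁻¹)

end Cartan

/-! ## Hall numbers, Hall polynomials and Hall algebras -/

section Hall

open TensorProduct

/-- The Hall number `F^L_{MN}`: the number of submodules `U ⊆ L` with `U ≅ N` and
`L/U ≅ M`. -/
noncomputable def hallNum (Λ : Type) [Ring Λ] (L M N : Type) [AddCommGroup L] [Module Λ L]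
    [AddCommGroup M] [Module Λ M] [AddCommGroup N] [Module Λ N] : ℕ :=
  Set.ncard {U : Submodule Λ L | Nonempty (↥U ≃ₗ[Λ] N) ∧ Nonempty ((L ⧸ U) ≃ₗ[Λ] M)}

/-- The type of finitely generated modules. -/
def FGMod (Λ : Type) [Ring Λ] := {M : ModuleCat.{0} Λ // Module.Finite Λ M}

instance fgModSetoid (Λ : Type) [Ring Λ] : Setoid (FGMod Λ) where
  r M N := Nonempty (↥M.1 ≃ₗ[Λ] ↥N.1)
  iseqv := ⟨fun _ => ⟨LinearEquiv.refl _ _⟩, fun ⟨e⟩ => ⟨e.symm⟩,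
    fun ⟨e⟩ ⟨f⟩ => ⟨e.trans f⟩⟩

/-- Isomorphism classes of finitely generated modules. -/
def FGClass (Λ : Type) [Ring Λ] := Quotient (fgModSetoid Λ)

/-- The Hall number attached to three isomorphism classes of finitely generated modules. -/
noncomputable def hallNumCls (Λ : Type) [Ring Λ] (L M N : FGClass Λ) : ℕ :=
  hallNum Λ L.out.1 M.out.1 N.out.1

/-- The multiplication of the rational Ringel-Hall algebra, on coefficient functions:
`(f * g)(L) = ∑_{M,N} f(M) g(N) F^L_{MN}`. -/
noncomputable def hallMul (Λ : Type) [Ring Λ] (f g : FGClass Λ → ℚ) : FGClass Λ → ℚ :=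
  fun L => ∑ᶠ M : FGClass Λ, ∑ᶠ N : FGClass Λ, f M * g N * (hallNumCls Λ L M N : ℚ)

/-- The class of the zero module. -/
noncomputable def zeroFGClass (Λ : Type) [Ring Λ] : FGClass Λ :=
  Quotient.mk _ (⟨ModuleCat.of Λ PUnit, inferInstance⟩ : FGMod Λ)

/-- The basis vector `u_{[X]}` of the Ringel-Hall algebra. -/
noncomputable def hallDelta (Λ : Type) [Ring Λ] (X : FGClass Λ) : FGClass Λ → ℚ := by
  classical exact fun L => if L = X then 1 else 0

/-- The rational composition algebra inside the rational Ringel-Hall algebra: the smallest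
subset containing the unit `u_{[0]}` and the classes of the simple modules which is closed
under addition, rational scalar multiples and the Hall multiplication. -/
inductive InCompositionAlgebra (Λ : Type) [Ring Λ] : (FGClass Λ → ℚ) → Prop
  | one : InCompositionAlgebra Λ (hallDelta Λ (zeroFGClass Λ))
  | simple (S : ModuleCat.{0} Λ) (hfin : Module.Finite Λ S) (hs : IsSimpleModule Λ S) :
      InCompositionAlgebra Λ (hallDelta Λ (Quotient.mk _ (⟨S, hfin⟩ : FGMod Λ)))
  | add (f g : FGClass Λ → ℚ) : InCompositionAlgebra Λ f → InCompositionAlgebra Λ g →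
      InCompositionAlgebra Λ (f + g)
  | smul (q : ℚ) (f : FGClass Λ → ℚ) : InCompositionAlgebra Λ f →
      InCompositionAlgebra Λ (q • f)
  | mul (f g : FGClass Λ → ℚ) : InCompositionAlgebra Λ f → InCompositionAlgebra Λ g →
      InCompositionAlgebra Λ (hallMul Λ f g)

/-! ### Base change of modules along a field extension -/

section BaseChange

variable (K : Type) [Field K] (Λ : Type) [Ring Λ] [Algebra K Λ]
variable (E : Type) [Field E] [Algebra K E]
variable (M : Type) [AddCommGroup M] [Module Λ M] [Module K M] [IsScalarTower K Λ M]

set_option maxHeartbeats 1000000 in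
/-- `f ↦ 1 ⊗ f` on endomorphisms, as an algebra map. -/
noncomputable def lTensorEndAlgHom :
    Module.End K M →ₐ[K] Module.End K (E ⊗[K] M) where
  toFun f := LinearMap.lTensor E f
  map_one' := by
    simp only [Module.End.one_eq_id]
    exact LinearMap.lTensor_id E M
  map_mul' f g := by
    simp only [Module.End.mul_eq_comp]
    exact LinearMap.lTensor_comp E f g
  map_zero' := LinearMap.lTensor_zero E
  map_add' f g := LinearMap.lTensor_add E f g
  commutes' k := by
    simp only [Module.algebraMap_end_eq_smul_id]
    rw [LinearMap.lTensor_smul, LinearMap.lTensor_id]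

/-- The action of `Λ` on `E ⊗[K] M` through the right factor, as an algebra map to
endomorphisms. -/
noncomputable def extScalarsAlgHom : Λ →ₐ[K] Module.End K (E ⊗[K] M) :=
  (lTensorEndAlgHom K E M).comp (Algebra.lsmul K K M)

set_option maxHeartbeats 1000000 in
theorem extScalarsAlgHom_tmul (l : Λ) (e : E) (m : M) :
    extScalarsAlgHom K Λ E M l (e ⊗ₜ[K] m) = e ⊗ₜ[K] (l • m) := by
  have h1 : extScalarsAlgHom K Λ E M l =
      LinearMap.lTensor E ((Algebra.lsmul K K M : Λ →ₐ[K] Module.End K M) l) := rfl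
  rw [h1, LinearMap.lTensor_tmul]
  rfl

/-- The `Λ`-module structure on `E ⊗[K] M`. -/
noncomputable def extModuleRight : Module Λ (E ⊗[K] M) :=
  Module.compHom _ (extScalarsAlgHom K Λ E M).toRingHom

set_option maxHeartbeats 1000000 in
/-- The `E ⊗[K] Λ`-module structure on `E ⊗[K] M`. -/
noncomputable def extModule : Module (E ⊗[K] Λ) (E ⊗[K] M) := by
  letI : Module Λ (E ⊗[K] M) := extModuleRight K Λ E M
  haveI : IsScalarTower K Λ (E ⊗[K] M) := ⟨fun k l x => by
    show (extScalarsAlgHom K Λ E M (k • l)) x = k • (extScalarsAlgHom K Λ E M l) x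
    rw [Algebra.smul_def, map_mul, AlgHom.commutes]
    rfl⟩
  haveI : SMulCommClass E Λ (E ⊗[K] M) := ⟨fun e l x => by
    show e • (extScalarsAlgHom K Λ E M l) x = (extScalarsAlgHom K Λ E M l) (e • x)
    induction x using TensorProduct.induction_on with
    | zero => simp
    | tmul e' m =>
        rw [TensorProduct.smul_tmul', extScalarsAlgHom_tmul, extScalarsAlgHom_tmul,
          TensorProduct.smul_tmul']
    | add x y hx hy => rw [map_add, smul_add, hx, hy, smul_add, map_add]⟩
  exact TensorProduct.Algebra.module

end BaseChange

/-- The Hall number `F^{L^E}_{M^E N^E}` of the base-changed modules over the base-changed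
algebra `Λ^E = E ⊗_K Λ`. -/
noncomputable def hallNumExt (K : Type) [Field K] (Λ : Type) [Ring Λ] [Algebra K Λ]
    (E : Type) [Field E] [Algebra K E] (L M N : Type)
    [AddCommGroup L] [Module Λ L] [AddCommGroup M] [Module Λ M]
    [AddCommGroup N] [Module Λ N] : ℕ :=
  letI : AddCommMonoid (RestrictScalars K Λ L) := AddCommGroup.toAddCommMonoid
  letI : @Module Λ (RestrictScalars K Λ L) _ AddCommGroup.toAddCommMonoid :=
    RestrictScalars.moduleOrig K Λ L
  letI : @Module K (RestrictScalars K Λ L) _ AddCommGroup.toAddCommMonoid :=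
    RestrictScalars.module K Λ L
  letI : AddCommMonoid (RestrictScalars K Λ M) := AddCommGroup.toAddCommMonoid
  letI : @Module Λ (RestrictScalars K Λ M) _ AddCommGroup.toAddCommMonoid :=
    RestrictScalars.moduleOrig K Λ M
  letI : @Module K (RestrictScalars K Λ M) _ AddCommGroup.toAddCommMonoid :=
    RestrictScalars.module K Λ M
  letI : AddCommMonoid (RestrictScalars K Λ N) := AddCommGroup.toAddCommMonoid
  letI : @Module Λ (RestrictScalars K Λ N) _ AddCommGroup.toAddCommMonoid :=
    RestrictScalars.moduleOrig K Λ N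
  letI : @Module K (RestrictScalars K Λ N) _ AddCommGroup.toAddCommMonoid :=
    RestrictScalars.module K Λ N
  letI := extModule K Λ E (RestrictScalars K Λ L)
  letI := extModule K Λ E (RestrictScalars K Λ M)
  letI := extModule K Λ E (RestrictScalars K Λ N)
  hallNum (E ⊗[K] Λ) (E ⊗[K] RestrictScalars K Λ L) (E ⊗[K] RestrictScalars K Λ M)
    (E ⊗[K] RestrictScalars K Λ N)

/-- The Jacobson radical of a ring, as a set. -/
def jacobsonSet (A : Type) [Ring A] : Set A := {x | ∀ y : A, IsUnit (1 - y * x)}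

/-- The quotient of a ring by its Jacobson radical. -/
abbrev ResidueRing (A : Type) [Ring A] : Type :=
  RingQuot (fun x y : A => x - y ∈ jacobsonSet A)

/-- A finite field extension `E/K` is conservative for `Λ` if for every indecomposable
finitely generated module `M`, `(End(M)/rad End(M)) ⊗_K E` is a field. -/
def IsConservative (K : Type) [Field K] (Λ : Type) [Ring Λ] [Algebra K Λ]
    (E : Type) [Field E] [Algebra K E] : Prop :=
  ∀ M : ModuleCat.{0} Λ, Module.Finite Λ M → IsIndecomposableModule Λ M →
    letI : AddCommMonoid (RestrictScalars K Λ M) := AddCommGroup.toAddCommMonoid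
    letI : @Module Λ (RestrictScalars K Λ M) _ AddCommGroup.toAddCommMonoid :=
      RestrictScalars.moduleOrig K Λ M
    letI : @Module K (RestrictScalars K Λ M) _ AddCommGroup.toAddCommMonoid :=
      RestrictScalars.module K Λ M
    IsField ((ResidueRing (Module.End Λ (RestrictScalars K Λ M))) ⊗[K] E)

/-- `Λ` has Hall polynomials: for all finitely generated modules `L, M, N` there is an
integer polynomial `φ` with `φ(|E|) = F^{L^E}_{M^E N^E}` for every finite field extension
`E` of `K` which is conservative for `Λ`. -/
def HasHallPolynomials (K : Type) [Field K] (Λ : Type) [Ring Λ] [Algebra K Λ] : Prop :=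
  ∀ L M N : ModuleCat.{0} Λ, Module.Finite Λ L → Module.Finite Λ M → Module.Finite Λ N →
    ∃ φ : Polynomial ℤ,
      ∀ (E : Type) [Field E] [Algebra K E] [FiniteDimensional K E],
        IsConservative K Λ E →
        Polynomial.eval (Nat.card E : ℤ) φ = (hallNumExt K Λ E L M N : ℤ)

end Hall

section ArrowHom

variable (K : Type) [CommRing K] (Q : QuiverData) (I : Set (List Q.A))

/-- The morphism `P_{t(α)} → P_{s(α)}` between indecomposable projective modules induced by
an arrow `α` (given by right multiplication by `α`). -/
noncomputable def arrowHom (a : Q.A) :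
    ↥(Pmod K Q I (Q.t a)) →ₗ[BoundQuiverAlgebra K Q I] ↥(Pmod K Q I (Q.s a)) :=
  (LinearMap.toSpanSingleton (BoundQuiverAlgebra K Q I) (BoundQuiverAlgebra K Q I)
    (arrEl K Q I a)).restrict (fun x _ => Rmod_le_Pmod K Q I a ⟨x, rfl⟩)

end ArrowHom

/-- `χ_M(x)`: the characteristic polynomial of the asymmetry matrix `-Mᵀ M⁻¹` of a square
matrix `M` over `ℚ`. -/
noncomputable def asymCharpoly {n : Type} [Fintype n] [DecidableEq n]
    (M : Matrix n n ℚ) : Polynomial ℚ :=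
  Matrix.charpoly (-M.transpose * M⁻¹)

/-! Write `C = diag(C₁, C₂) · U` with `U = [[1, ε], [0, 1]]`. Since `det U = 1`, the congruence
`C ↦ (U⁻¹)ᵀ C U⁻¹` preserves `det (t C + Cᵀ)`, and it turns `C` into `[[C₁, 0], [-εᵀ, C₂]]`
because the last row of `C₁` is a unit vector. So `t C + Cᵀ` becomes block diagonal up to a
single "edge" joining the last vertex of `C₁` to the first vertex of `C₂`, and expanding along
that edge, as for the characteristic polynomial of two graphs joined by an edge, gives
`det (t C + Cᵀ) = det (t C₁ + C₁ᵀ) det (t C₂ + C₂ᵀ) - t det (t C_B + C_Bᵀ) det (t C_C + C_Cᵀ)`.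
Finally `X M + Mᵀ = (X - (-Mᵀ M⁻¹)) M`, so `det (X M + Mᵀ) = det M · χ_M` for invertible `M`,
and it remains to divide by `det C = det C_B · det C_C`. -/

open Matrix Polynomial

namespace Matrix

variable {ι κ R : Type*} [Fintype ι] [DecidableEq ι] [Fintype κ] [DecidableEq κ] [CommRing R]

theorem det_updateRow_inr_single (A : Matrix (ι ⊕ Unit) (ι ⊕ Unit) R) (b : R) :
    (A.updateRow (Sum.inr ()) (Pi.single (Sum.inr ()) b)).det = b * A.toBlocks₁₁.det := by
  have : A.updateRow (Sum.inr ()) (Pi.single (Sum.inr ()) b) =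
      fromBlocks A.toBlocks₁₁ A.toBlocks₁₂ 0 (of fun _ _ => b) := by
    ext (i | _) (j | _) <;> simp [updateRow_apply, toBlocks₁₁, toBlocks₁₂]
  rw [this, det_fromBlocks_zero₂₁, det_unique (of fun _ _ => b), mul_comm, of_apply]

theorem det_updateRow_inl_single (D : Matrix (Unit ⊕ κ) (Unit ⊕ κ) R) (a : R) :
    (D.updateRow (Sum.inl ()) (Pi.single (Sum.inl ()) a)).det = a * D.toBlocks₂₂.det := by
  have : D.updateRow (Sum.inl ()) (Pi.single (Sum.inl ()) a) =
      fromBlocks (of fun _ _ => a) 0 D.toBlocks₂₁ D.toBlocks₂₂ := by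
    ext (_ | i) (_ | j) <;> simp [updateRow_apply, toBlocks₂₁, toBlocks₂₂]
  rw [this, det_fromBlocks_zero₁₂, det_unique (of fun _ _ => a), of_apply]

theorem det_fromBlocks_single_single (A : Matrix (ι ⊕ Unit) (ι ⊕ Unit) R)
    (D : Matrix (Unit ⊕ κ) (Unit ⊕ κ) R) (a b : R) :
    (fromBlocks A (single (Sum.inr ()) (Sum.inl ()) a) (single (Sum.inl ()) (Sum.inr ()) b) D).det
      = A.det * D.det - a * b * A.toBlocks₁₁.det * D.toBlocks₂₂.det := by
  set M := fromBlocks A (single (Sum.inr ()) (Sum.inl ()) a) (single (Sum.inl ()) (Sum.inr ()) b) D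
  set r : (ι ⊕ Unit) ⊕ (Unit ⊕ κ) := Sum.inl (Sum.inr ())
  set c : (ι ⊕ Unit) ⊕ (Unit ⊕ κ) := Sum.inr (Sum.inl ())
  have hrow : M r = Sum.elim (A (Sum.inr ())) 0 + Pi.single c a := by
    ext ((j | _) | (_ | j)) <;> simp [M, r, c]
  have hcut : M.updateRow r (Sum.elim (A (Sum.inr ())) 0) =
      fromBlocks A 0 (single (Sum.inl ()) (Sum.inr ()) b) D := by
    ext ((i | _) | (_ | i)) ((j | _) | (_ | j)) <;> simp [M, r, updateRow_apply]
  -- with only the edge entry left in row `r`, swapping rows `r` and `c` makes it block triangular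
  have hswap : (M.updateRow r (Pi.single c a)).submatrix (Equiv.swap r c) id =
      fromBlocks (A.updateRow (Sum.inr ()) (Pi.single (Sum.inr ()) b))
        ((0 : Matrix (ι ⊕ Unit) (Unit ⊕ κ) R).updateRow (Sum.inr ()) (D (Sum.inl ())))
        0 (D.updateRow (Sum.inl ()) (Pi.single (Sum.inl ()) a)) := by
    ext ((i | _) | (_ | i)) ((j | _) | (_ | j)) <;>
      simp [M, r, c, updateRow_apply, Equiv.swap_apply_def]
  have hsign : ((Equiv.Perm.sign (Equiv.swap r c) : ℤ) : R) = -1 := by simp [r, c]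
  have hedge := det_permute (Equiv.swap r c) (M.updateRow r (Pi.single c a))
  rw [hswap, det_fromBlocks_zero₂₁, hsign, det_updateRow_inr_single,
    det_updateRow_inl_single] at hedge
  rw [← updateRow_eq_self M r, hrow, det_updateRow_add, hcut, det_fromBlocks_zero₁₂]
  linear_combination hedge

theorem det_smul_add_transpose_transpose_mul_mul {n : Type*} [Fintype n] [DecidableEq n]
    (C P : Matrix n n R) (t : R) :
    (t • (Pᵀ * C * P) + (Pᵀ * C * P)ᵀ).det = P.det ^ 2 * (t • C + Cᵀ).det := by
  have : t • (Pᵀ * C * P) + (Pᵀ * C * P)ᵀ = Pᵀ * (t • C + Cᵀ) * P := by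
    simp only [transpose_mul, transpose_transpose, Matrix.mul_add, Matrix.add_mul,
      Matrix.mul_smul, Matrix.smul_mul, Matrix.mul_assoc]
  rw [this, det_mul, det_mul, det_transpose]
  ring

theorem single_one_mul_of_row_eq_single {m n : Type*} [DecidableEq m] [Fintype n] [DecidableEq n]
    (C : Matrix n n R) {j : n} (hC : C j = Pi.single j 1) (i : m) :
    (single i j 1 : Matrix m n R) * C = single i j 1 := by
  ext k l
  simp [single, Matrix.mul_apply, hC, Pi.single_apply, ite_and, eq_comm]

theorem det_smul_add_transpose_glue (C₁ : Matrix (ι ⊕ Unit) (ι ⊕ Unit) R)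
    (C₂ : Matrix (Unit ⊕ κ) (Unit ⊕ κ) R) (hC₁ : C₁ (Sum.inr ()) = Pi.single (Sum.inr ()) 1)
    (t : R) :
    let C := fromBlocks C₁
      (C₁ * (single (Sum.inr ()) (Sum.inl ()) 1 : Matrix (ι ⊕ Unit) (Unit ⊕ κ) R)) 0 C₂
    (t • C + Cᵀ).det = (t • C₁ + C₁ᵀ).det * (t • C₂ + C₂ᵀ).det -
      t * (t • C₁.toBlocks₁₁ + C₁.toBlocks₁₁ᵀ).det * (t • C₂.toBlocks₂₂ + C₂.toBlocks₂₂ᵀ).det := by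
  intro C
  set ε : Matrix (ι ⊕ Unit) (Unit ⊕ κ) R := single (Sum.inr ()) (Sum.inl ()) 1
  set P : Matrix ((ι ⊕ Unit) ⊕ (Unit ⊕ κ)) ((ι ⊕ Unit) ⊕ (Unit ⊕ κ)) R := fromBlocks 1 (-ε) 0 1
  have hP : P.det = 1 := by simp [P]
  have hCP : C * P = fromBlocks C₁ 0 0 C₂ := by simp [C, P, ε, fromBlocks_multiply]
  have hcongr : Pᵀ * C * P = fromBlocks C₁ 0 (-εᵀ) C₂ := by
    rw [Matrix.mul_assoc, hCP]
    simp [P, ε, fromBlocks_transpose, fromBlocks_multiply, transpose_single,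
      single_one_mul_of_row_eq_single C₁ hC₁]
  have hpencil : t • fromBlocks C₁ 0 (-εᵀ) C₂ + (fromBlocks C₁ 0 (-εᵀ) C₂)ᵀ =
      fromBlocks (t • C₁ + C₁ᵀ) (single (Sum.inr ()) (Sum.inl ()) (-1))
        (single (Sum.inl ()) (Sum.inr ()) (-t)) (t • C₂ + C₂ᵀ) := by
    ext ((i | _) | (_ | i)) ((j | _) | (_ | j)) <;> simp [ε]
  have h₁₁ : (t • C₁ + C₁ᵀ).toBlocks₁₁ = t • C₁.toBlocks₁₁ + C₁.toBlocks₁₁ᵀ := rfl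
  have h₂₂ : (t • C₂ + C₂ᵀ).toBlocks₂₂ = t • C₂.toBlocks₂₂ + C₂.toBlocks₂₂ᵀ := rfl
  have hdet := det_smul_add_transpose_transpose_mul_mul C P t
  rw [hcongr, hP, hpencil, det_fromBlocks_single_single, h₁₁, h₂₂, one_pow, one_mul] at hdet
  rw [← hdet]
  ring

theorem charmatrix_neg_transpose_mul_inv_mul {n : Type*} [Fintype n] [DecidableEq n]
    (M : Matrix n n R) (h : IsUnit M.det) :
    charmatrix (-Mᵀ * M⁻¹) * M.map C = (X : R[X]) • M.map C + (M.map C)ᵀ := by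
  have hinv : -Mᵀ * M⁻¹ * M = -Mᵀ := by rw [Matrix.mul_assoc, nonsing_inv_mul M h, Matrix.mul_one]
  rw [charmatrix, Matrix.sub_mul, ← RingHom.mapMatrix_apply, ← map_mul, hinv]
  simp [Matrix.scalar_apply, ← smul_eq_diagonal_mul, sub_eq_add_neg, Matrix.map_neg, transpose_map]

end Matrix

theorem det_X_smul_add_transpose {n : Type} [Fintype n] [DecidableEq n]
    (M : Matrix n n ℚ) (h : IsUnit M.det) :
    ((X : ℚ[X]) • M.map C + (M.map C)ᵀ).det = C M.det * asymCharpoly M := by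
  rw [← M.charmatrix_neg_transpose_mul_inv_mul h, det_mul, mul_comm, ← RingHom.mapMatrix_apply,
    ← RingHom.map_det, asymCharpoly, charpoly]

theorem subbotin_sumin_formula_general (m k : ℕ)
    (CB : Matrix (Fin (m - 1)) (Fin (m - 1)) ℚ)
    (CC : Matrix (Fin (k - 1)) (Fin (k - 1)) ℚ)
    (hB : IsUnit CB.det) (hC : IsUnit CC.det) :
    let α : Fin (m - 1) → ℚ := fun i => if (i : ℕ) = m - 2 then 1 else 0
    let β : Fin (k - 1) → ℚ := fun i => if (i : ℕ) = 0 then 1 else 0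
    let C₁ : Matrix (Fin (m - 1) ⊕ Unit) (Fin (m - 1) ⊕ Unit) ℚ :=
      Matrix.fromBlocks CB (Matrix.of fun i (_ : Unit) => (CB.mulVec α) i) 0 1
    let C₂ : Matrix (Unit ⊕ Fin (k - 1)) (Unit ⊕ Fin (k - 1)) ℚ :=
      Matrix.fromBlocks 1 0 (Matrix.of fun i (_ : Unit) => (CC.mulVec β) i) CC
    let ε : Matrix (Fin (m - 1) ⊕ Unit) (Unit ⊕ Fin (k - 1)) ℚ :=
      Matrix.fromBlocks 0 0 1 0
    let C : Matrix ((Fin (m - 1) ⊕ Unit) ⊕ (Unit ⊕ Fin (k - 1)))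
        ((Fin (m - 1) ⊕ Unit) ⊕ (Unit ⊕ Fin (k - 1))) ℚ :=
      Matrix.fromBlocks C₁ (C₁ * ε) 0 C₂
    asymCharpoly C = asymCharpoly C₁ * asymCharpoly C₂ -
      Polynomial.X * asymCharpoly CB * asymCharpoly CC := by
  intro α β C₁ C₂ ε C
  have hε : ε = single (Sum.inr ()) (Sum.inl ()) 1 := by
    ext (_ | _) (_ | _) <;> simp [ε]
  have hdet₁ : C₁.det = CB.det := by simp [C₁]
  have hdet₂ : C₂.det = CC.det := by simp [C₂, det_fromBlocks_zero₁₂]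
  have hdet : C.det = CB.det * CC.det := by rw [det_fromBlocks_zero₂₁, hdet₁, hdet₂]
  have hunit : IsUnit (CB.det * CC.det) := hB.mul hC
  have hmap : C.map Polynomial.C = fromBlocks (C₁.map Polynomial.C) (C₁.map Polynomial.C *
      (single (Sum.inr ()) (Sum.inl ()) 1 : Matrix (Fin (m - 1) ⊕ Unit) (Unit ⊕ Fin (k - 1)) ℚ[X]))
      0 (C₂.map Polynomial.C) := by
    simp [C, hε, fromBlocks_map, Matrix.map_mul]
  have hglue := det_smul_add_transpose_glue (C₁.map Polynomial.C) (C₂.map Polynomial.C)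
    (by ext (_ | _) <;> simp [C₁]) X
  have hB₁ : (C₁.map Polynomial.C).toBlocks₁₁ = CB.map Polynomial.C := rfl
  have hC₂ : (C₂.map Polynomial.C).toBlocks₂₂ = CC.map Polynomial.C := rfl
  simp only [← hmap, hB₁, hC₂] at hglue
  rw [det_X_smul_add_transpose C (hdet ▸ hunit), det_X_smul_add_transpose C₁ (hdet₁ ▸ hB),
    det_X_smul_add_transpose C₂ (hdet₂ ▸ hC), det_X_smul_add_transpose CB hB,
    det_X_smul_add_transpose CC hC, hdet, hdet₁, hdet₂, map_mul] at hglue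
  apply mul_left_cancel₀ (Polynomial.C_ne_zero.mpr hunit.ne_zero)
  rw [map_mul]
  linear_combination hglue

/-- The Subbotin–Sumin splitting formula for Coxeter polynomials:
for block matrices as in the glued-graph situation,
`χ_C = χ_{C₁} χ_{C₂} − x χ_{C_B} χ_{C_C}`. -/
theorem subbotin_sumin_formula (m k : ℕ) (hm : 1 ≤ m) (hk : 1 ≤ k)
    (CB : Matrix (Fin (m - 1)) (Fin (m - 1)) ℚ)
    (CC : Matrix (Fin (k - 1)) (Fin (k - 1)) ℚ)
    (hB : IsUnit CB.det) (hC : IsUnit CC.det) :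
    let α : Fin (m - 1) → ℚ := fun i => if (i : ℕ) = m - 2 then 1 else 0
    let β : Fin (k - 1) → ℚ := fun i => if (i : ℕ) = 0 then 1 else 0
    let C₁ : Matrix (Fin (m - 1) ⊕ Unit) (Fin (m - 1) ⊕ Unit) ℚ :=
      Matrix.fromBlocks CB (Matrix.of fun i (_ : Unit) => (CB.mulVec α) i) 0 1
    let C₂ : Matrix (Unit ⊕ Fin (k - 1)) (Unit ⊕ Fin (k - 1)) ℚ :=
      Matrix.fromBlocks 1 0 (Matrix.of fun i (_ : Unit) => (CC.mulVec β) i) CC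
    let ε : Matrix (Fin (m - 1) ⊕ Unit) (Unit ⊕ Fin (k - 1)) ℚ :=
      Matrix.fromBlocks 0 0 1 0
    let C : Matrix ((Fin (m - 1) ⊕ Unit) ⊕ (Unit ⊕ Fin (k - 1)))
        ((Fin (m - 1) ⊕ Unit) ⊕ (Unit ⊕ Fin (k - 1))) ℚ :=
      Matrix.fromBlocks C₁ (C₁ * ε) 0 C₂
    asymCharpoly C = asymCharpoly C₁ * asymCharpoly C₂ -
      Polynomial.X * asymCharpoly CB * asymCharpoly CC :=
  subbotin_sumin_formula_general m k CB CC hB hC
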